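/- (Theorem 2, convergence rates.) Under the stated setup, let α* ∈ ℝⁿ and ω* ∈ ℝ^p satisfy Z·α* = 0 and Φ(a) + ⟨ω*, Z·a⟩ ≥ Φ(α*) for all a ∈ ℝⁿ. Set Ξ := 4(1+d)·λ_max(S⁻¹)·‖ω*‖² + (1+d)·ω(0)ᵀS⁻¹ω(0) + ½·(α* − α(0))ᵀC⁻¹(α* − α(0)) + Γ/2. Then for every natural number T ≥ 2d+1: ‖ω*‖·‖Z·ᾱ(T+1)‖ ≤ Ξ/(T+1) and |Φ(ᾱ(T+1)) − Φ(α*)| ≤ Ξ/(T+1). -/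

import Mathlib

/-!
Each iteration is a proximal-gradient step on the augmented Lagrangian, taken with the stale
multiplier `ω (t - d)` and the stale primal iterate `α (t - d)`. Fix a dual test vector `ν`. The
descent lemma for `Hs`, the optimality condition of the prox step and the three-point identity in
the `C⁻¹`-norm bound the gap `Φ (α (t+1)) - Φ α* + ⟨ν, Z α (t+1)⟩` by a telescoping primal term, a
dual term that telescopes with delay `d` (which costs a factor `1 + d` on the initial dual
distance), and a staleness error. Writing `Z α (t+1) - Z α (t-d)` as a sum of at most `d + 1`
increments and applying Young's inequality to each, the staleness error is paid for by the
step-size condition `C⁻¹ ⪰ H + (1+d)² ZᵀSZ`. Summing over `t`, applying Jensen's inequality to the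
convex `Φ`, and taking `ν` parallel to `Z ᾱ` with `|ν| ≤ 2 |ω*|` bounds
`Φ ᾱ - Φ α* + 2 |ω*| |Z ᾱ|` by `Ξ / (T+1)`. The saddle-point inequality together with
Cauchy–Schwarz gives `Φ ᾱ - Φ α* ≥ -|ω*| |Z ᾱ|`, and both rates follow.
-/

open Matrix Finset

/-- The quadratic form `‖x‖²_A = xᵀ A x`. -/
noncomputable def qf {k : ℕ} (A : Matrix (Fin k) (Fin k) ℝ) (x : Fin k → ℝ) : ℝ :=
  x ⬝ᵥ (A *ᵥ x)

/-- The largest eigenvalue of a real symmetric matrix, as the supremum of the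
quadratic form over Euclidean unit vectors. -/
noncomputable def lamMax {k : ℕ} (A : Matrix (Fin k) (Fin k) ℝ) : ℝ :=
  sSup {r : ℝ | ∃ x : Fin k → ℝ, x ⬝ᵥ x = 1 ∧ r = x ⬝ᵥ (A *ᵥ x)}

open Filter Topology

section QuadraticForm

variable {k : ℕ} {A : Matrix (Fin k) (Fin k) ℝ}

lemma qf_nonneg (hA : A.PosSemidef) (x : Fin k → ℝ) : 0 ≤ qf A x := by
  simpa [qf] using hA.dotProduct_mulVec_nonneg x

lemma Matrix.PosSemidef.isSymm (hA : A.PosSemidef) : A.IsSymm :=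
  isHermitian_iff_isSymm.mp hA.isHermitian

lemma Matrix.IsSymm.dotProduct_mulVec_comm (hA : A.IsSymm) (x y : Fin k → ℝ) :
    x ⬝ᵥ A *ᵥ y = y ⬝ᵥ A *ᵥ x := by
  conv_lhs => rw [← hA.eq]
  exact dotProduct_transpose_mulVec A x y

lemma qf_add (hA : A.IsSymm) (x y : Fin k → ℝ) :
    qf A (x + y) = qf A x + 2 * (x ⬝ᵥ A *ᵥ y) + qf A y := by
  have := hA.dotProduct_mulVec_comm y x
  simp only [qf, mulVec_add, dotProduct_add, add_dotProduct]
  linarith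

lemma qf_sub (hA : A.IsSymm) (x y : Fin k → ℝ) :
    qf A (x - y) = qf A x - 2 * (x ⬝ᵥ A *ᵥ y) + qf A y := by
  have := hA.dotProduct_mulVec_comm y x
  simp only [qf, mulVec_sub, dotProduct_sub, sub_dotProduct]
  linarith

lemma qf_smul (c : ℝ) (x : Fin k → ℝ) :
    qf A (c • x) = c ^ 2 * qf A x := by
  simp only [qf, mulVec_smul, dotProduct_smul, smul_dotProduct, smul_eq_mul]
  ring

lemma two_mul_sub_dotProduct_mulVec_sub (hA : A.IsSymm) (a b c : Fin k → ℝ) :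
    2 * ((a - c) ⬝ᵥ A *ᵥ (c - b)) = qf A (a - b) - qf A (a - c) - qf A (c - b) := by
  rw [show a - b = (a - c) + (c - b) by abel, qf_add hA]
  ring

lemma dotProduct_mulVec_le_young (hA : A.PosSemidef) {c : ℝ} (hc : 0 < c) (x y : Fin k → ℝ) :
    x ⬝ᵥ A *ᵥ y ≤ qf A x / (2 * c) + c / 2 * qf A y := by
  have h := qf_nonneg hA (x - c • y)
  rw [qf_sub hA.isSymm, qf_smul, mulVec_smul, dotProduct_smul, smul_eq_mul] at h
  rw [div_add' _ _ _ (by positivity), le_div_iff₀ (by positivity)]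
  nlinarith

lemma bddAbove_lamMax_set :
    BddAbove {r : ℝ | ∃ x : Fin k → ℝ, x ⬝ᵥ x = 1 ∧ r = x ⬝ᵥ (A *ᵥ x)} := by
  have hK : IsCompact {x : Fin k → ℝ | x ⬝ᵥ x = 1} := by
    refine Metric.isCompact_of_isClosed_isBounded
      (isClosed_eq (by fun_prop) continuous_const)
      ((Metric.isBounded_closedBall (x := 0) (r := 1)).subset ?_)
    intro x hx
    rw [mem_closedBall_zero_iff, pi_norm_le_iff_of_nonneg zero_le_one]
    intro i
    have : x i * x i ≤ 1 := hx ▸ single_le_sum (f := fun j => x j * x j)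
      (fun j _ => mul_self_nonneg (x j)) (mem_univ i)
    rw [Real.norm_eq_abs, abs_le]
    constructor <;> nlinarith
  obtain ⟨M, hM⟩ := hK.bddAbove_image (f := fun x => x ⬝ᵥ A *ᵥ x) (by fun_prop)
  exact ⟨M, fun r ⟨x, hx, hr⟩ => hr ▸ hM ⟨x, hx, rfl⟩⟩

lemma qf_le_lamMax_mul (x : Fin k → ℝ) :
    qf A x ≤ lamMax A * (x ⬝ᵥ x) := by
  rcases eq_or_ne x 0 with rfl | hx
  · simp [qf]
  have hxx : 0 < x ⬝ᵥ x := by simpa using dotProduct_star_self_pos_iff.2 hx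
  set s := √(x ⬝ᵥ x)
  have hs : s ^ 2 = x ⬝ᵥ x := Real.sq_sqrt hxx.le
  have hs0 : s ≠ 0 := (Real.sqrt_pos.2 hxx).ne'
  have hunit : (s⁻¹ • x) ⬝ᵥ (s⁻¹ • x) = 1 := by
    simp only [dotProduct_smul, smul_dotProduct, smul_eq_mul, ← hs]
    field_simp [hs0]
  have := le_csSup (bddAbove_lamMax_set (A := A)) ⟨_, hunit, rfl⟩
  rw [← qf, qf_smul, inv_pow, hs, inv_mul_le_iff₀ hxx, mul_comm] at this
  exact this

lemma lamMax_nonneg (hA : A.PosSemidef) : 0 ≤ lamMax A :=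
  Real.sSup_nonneg fun _ ⟨x, _, hr⟩ => hr ▸ qf_nonneg hA x

lemma half_qf_sub_le_lamMax_mul_add (hA : A.PosSemidef) (x y : Fin k → ℝ) :
    qf A (x - y) / 2 ≤ lamMax A * (x ⬝ᵥ x) + qf A y := by
  have := qf_nonneg hA (x + y)
  rw [qf_add hA.isSymm] at this
  rw [qf_sub hA.isSymm]
  linarith [qf_le_lamMax_mul (A := A) x]

lemma Matrix.PosDef.inv_mulVec_mulVec {C : Matrix (Fin k) (Fin k) ℝ} (hC : C.PosDef)
    (u : Fin k → ℝ) : C⁻¹ *ᵥ C *ᵥ u = u := by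
  rw [mulVec_mulVec, nonsing_inv_mul C ((isUnit_iff_isUnit_det C).1 hC.isUnit), one_mulVec]

lemma dotProduct_le_sqrt_mul_sqrt (x y : Fin k → ℝ) : x ⬝ᵥ y ≤ √(x ⬝ᵥ x) * √(y ⬝ᵥ y) := by
  simpa [dotProduct, sq] using Real.sum_mul_le_sqrt_mul_sqrt univ x y

lemma exists_dotProduct_eq_two_mul_sqrt_mul_sqrt (w z : Fin k → ℝ) :
    ∃ ν : Fin k → ℝ, ν ⬝ᵥ z = 2 * √(w ⬝ᵥ w) * √(z ⬝ᵥ z) ∧ ν ⬝ᵥ ν ≤ 4 * (w ⬝ᵥ w) := by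
  have hw : 0 ≤ w ⬝ᵥ w := by simpa using dotProduct_star_self_nonneg w
  have hz : 0 ≤ z ⬝ᵥ z := by simpa using dotProduct_star_self_nonneg z
  -- For `z = 0` the division by `√0 = 0` makes `ν = 0`, which still works.
  refine ⟨(2 * √(w ⬝ᵥ w) / √(z ⬝ᵥ z)) • z, ?_, ?_⟩
  · rw [smul_dotProduct, smul_eq_mul, div_mul_eq_mul_div, mul_div_assoc, Real.div_sqrt]
  · rw [smul_dotProduct, dotProduct_smul, smul_eq_mul, smul_eq_mul, ← mul_assoc, ← sq, div_pow,
      mul_pow, Real.sq_sqrt hw, Real.sq_sqrt hz]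
    rcases hz.eq_or_lt with hz0 | hz0
    · rw [← hz0]; simpa using hw
    · rw [div_mul_cancel₀ _ hz0.ne']; norm_num

end QuadraticForm

section MatrixQuadraticForm

variable {n p : ℕ}

lemma qf_transpose_mul_mul (Z : Matrix (Fin p) (Fin n) ℝ) (A : Matrix (Fin p) (Fin p) ℝ)
    (x : Fin n → ℝ) : qf (Zᵀ * A * Z) x = qf A (Z *ᵥ x) := by
  simp only [qf, ← mulVec_mulVec]
  rw [dotProduct_transpose_mulVec, dotProduct_comm]

lemma qf_add_mul_qf_mulVec_le {M H : Matrix (Fin n) (Fin n) ℝ} {Z : Matrix (Fin p) (Fin n) ℝ}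
    {S : Matrix (Fin p) (Fin p) ℝ} {c : ℝ} (h : (M - H - Zᵀ * (c • S) * Z).PosSemidef)
    (x : Fin n → ℝ) : qf H x + c * qf S (Z *ᵥ x) ≤ qf M x := by
  have hsplit : qf (M - H - Zᵀ * (c • S) * Z) x = qf M x - qf H x - c * qf S (Z *ᵥ x) := by
    have hZ := qf_transpose_mul_mul Z (c • S) x
    simp only [qf, sub_mulVec, dotProduct_sub, smul_mulVec, dotProduct_smul, smul_eq_mul] at hZ ⊢
    rw [hZ]
  linarith [qf_nonneg h x]

end MatrixQuadraticForm

lemma nonneg_of_forall_add_mul_nonneg {a b : ℝ}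
    (h : ∀ θ : ℝ, 0 < θ → θ ≤ 1 → 0 ≤ a + θ * b) : 0 ≤ a := by
  have hlim : Tendsto (fun θ : ℝ => a + θ * b) (𝓝[>] 0) (𝓝 a) := by
    have hcont : Continuous fun θ : ℝ => a + θ * b := by fun_prop
    exact (hcont.tendsto' 0 a (by simp)).mono_left nhdsWithin_le_nhds
  refine ge_of_tendsto hlim ?_
  filter_upwards [Ioc_mem_nhdsGT one_pos] with θ hθ using h θ hθ.1 hθ.2

lemma convexOn_univ_of_subgradient {ι : Type*} [Fintype ι] {f : (ι → ℝ) → ℝ}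
    (g : (ι → ℝ) → ι → ℝ) (hg : ∀ a b, f a + g a ⬝ᵥ (b - a) ≤ f b) :
    ConvexOn ℝ Set.univ f := by
  refine ⟨convex_univ, fun x _ y _ a b ha hb hab => ?_⟩
  set z := a • x + b • y
  have hsum : a • (x - z) + b • (y - z) = 0 := by
    linear_combination (norm := module) -(hab • z)
  have hx := hg z x
  have hy := hg z y
  calc f z = a * f z + b * f z + g z ⬝ᵥ (a • (x - z) + b • (y - z)) := by
        rw [hsum, dotProduct_zero, ← add_mul, hab, one_mul, add_zero]
    _ ≤ a * f x + b * f y := by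
        rw [dotProduct_add, dotProduct_smul, dotProduct_smul, smul_eq_mul, smul_eq_mul]
        nlinarith [mul_le_mul_of_nonneg_left hx ha, mul_le_mul_of_nonneg_left hy hb]

lemma ConvexOn.mul_map_average_range_le {E : Type*} [AddCommGroup E] [Module ℝ E]
    {f : E → ℝ} (hf : ConvexOn ℝ Set.univ f) (x : ℕ → E) (N : ℕ) :
    (N + 1 : ℝ) * f ((N + 1 : ℝ)⁻¹ • ∑ t ∈ range (N + 1), x t)
      ≤ ∑ t ∈ range (N + 1), f (x t) := by
  have hN : (0 : ℝ) < N + 1 := by positivity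
  have := hf.map_sum_le (t := range (N + 1)) (w := fun _ => (N + 1 : ℝ)⁻¹) (p := x)
    (fun _ _ => by positivity) (by simp [hN.ne']) (fun _ _ => Set.mem_univ _)
  rw [← smul_sum, ← smul_sum, smul_eq_mul] at this
  rwa [le_inv_mul_iff₀ hN] at this

lemma ConvexOn.mul_map_add_dotProduct_average_le {n p : ℕ} {Φ : (Fin n → ℝ) → ℝ}
    (hΦ : ConvexOn ℝ Set.univ Φ) (Z : Matrix (Fin p) (Fin n) ℝ) (ν : Fin p → ℝ) (c : ℝ)
    (x : ℕ → Fin n → ℝ) (N : ℕ) :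
    (N + 1 : ℝ) * (Φ ((N + 1 : ℝ)⁻¹ • ∑ t ∈ range (N + 1), x t) - c
        + ν ⬝ᵥ Z *ᵥ ((N + 1 : ℝ)⁻¹ • ∑ t ∈ range (N + 1), x t))
      ≤ ∑ t ∈ range (N + 1), (Φ (x t) - c + ν ⬝ᵥ Z *ᵥ x t) := by
  have hN : (0 : ℝ) < N + 1 := by positivity
  have := hΦ.mul_map_average_range_le x N
  rw [mul_add, mul_sub, mulVec_smul, dotProduct_smul, smul_eq_mul, mul_inv_cancel_left₀ hN.ne',
    mulVec_sum, dotProduct_sum, sum_add_distrib, sum_sub_distrib, sum_const, card_range,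
    nsmul_eq_mul]
  push_cast
  linarith

section Proximal

variable {k : ℕ}

lemma prox_optimality {M : Matrix (Fin k) (Fin k) ℝ} (hM : M.IsSymm) {f : (Fin k → ℝ) → ℝ}
    (hf : ConvexOn ℝ Set.univ f) {x y : Fin k → ℝ}
    (hx : ∀ v, f x + 1 / 2 * qf M (x - y) ≤ f v + 1 / 2 * qf M (v - y)) (v : Fin k → ℝ) :
    f x + (v - x) ⬝ᵥ M *ᵥ (y - x) ≤ f v := by
  suffices 0 ≤ f v - f x - (v - x) ⬝ᵥ M *ᵥ (y - x) by linarith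
  refine nonneg_of_forall_add_mul_nonneg (b := qf M (v - x) / 2) fun θ hθ hθ1 => ?_
  have hconv : f (x + θ • (v - x)) ≤ (1 - θ) * f x + θ * f v := by
    have := hf.2 (Set.mem_univ x) (Set.mem_univ v) (sub_nonneg.2 hθ1) hθ.le (by ring)
    rwa [show (1 - θ) • x + θ • v = x + θ • (v - x) by module] at this
  have hexpand : qf M (x + θ • (v - x) - y)
      = θ ^ 2 * qf M (v - x) - 2 * θ * ((v - x) ⬝ᵥ M *ᵥ (y - x)) + qf M (x - y) := by
    rw [show x + θ • (v - x) - y = θ • (v - x) + (x - y) by abel, qf_add hM, qf_smul,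
      smul_dotProduct, smul_eq_mul, ← neg_sub y x, mulVec_neg, dotProduct_neg]
    ring
  have hmin := hx (x + θ • (v - x))
  rw [hexpand] at hmin
  have : 0 ≤ θ * (f v - f x - (v - x) ⬝ᵥ M *ᵥ (y - x) + θ * (qf M (v - x) / 2)) := by
    nlinarith
  exact (mul_nonneg_iff_of_pos_left hθ).1 this

lemma prox_grad_step_le {C H : Matrix (Fin k) (Fin k) ℝ} (hC : C.PosDef)
    {fs fr : (Fin k → ℝ) → ℝ} {grad : (Fin k → ℝ) → Fin k → ℝ}
    (hconv : ∀ a b, fs a + grad a ⬝ᵥ (b - a) ≤ fs b)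
    (hsmooth : ∀ a b, fs b ≤ fs a + grad a ⬝ᵥ (b - a) + 1 / 2 * qf H (b - a))
    (hfr : ConvexOn ℝ Set.univ fr) {x x' q : Fin k → ℝ}
    (hx' : ∀ v, fr x' + 1 / 2 * qf C⁻¹ (x' - (x - C *ᵥ (grad x + q)))
      ≤ fr v + 1 / 2 * qf C⁻¹ (v - (x - C *ᵥ (grad x + q))))
    (y : Fin k → ℝ) :
    fs x' + fr x' - (fs y + fr y)
      ≤ q ⬝ᵥ (y - x') + (qf C⁻¹ (y - x) - qf C⁻¹ (y - x')) / 2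
        - (qf C⁻¹ (x' - x) - qf H (x' - x)) / 2 := by
  have hCi := hC.inv.posSemidef.isSymm
  have hopt := prox_optimality hCi hfr hx' y
  have hres : C⁻¹ *ᵥ (x - C *ᵥ (grad x + q) - x') = -(C⁻¹ *ᵥ (x' - x)) - (grad x + q) := by
    rw [sub_right_comm, mulVec_sub, hC.inv_mulVec_mulVec, ← mulVec_neg, neg_sub]
  rw [hres, dotProduct_sub, dotProduct_neg, dotProduct_add] at hopt
  have hthree := two_mul_sub_dotProduct_mulVec_sub hCi y x x'
  have hlower := hconv x y
  have hupper := hsmooth x x'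
  have hgrad : grad x ⬝ᵥ (x' - x) + (y - x') ⬝ᵥ grad x = grad x ⬝ᵥ (y - x) := by
    rw [dotProduct_comm (y - x'), ← dotProduct_add, sub_add_sub_cancel']
  rw [dotProduct_comm q]
  linarith

end Proximal

section Delay

variable {k : ℕ} {S : Matrix (Fin k) (Fin k) ℝ}

lemma dotProduct_mulVec_sub_le_sum_Ico (hS : S.PosSemidef) (z : ℕ → Fin k → ℝ) {m l : ℕ}
    (hml : m ≤ l) {c : ℝ} (hc : 0 < c) (hlc : ((l - m : ℕ) : ℝ) ≤ c) :
    z l ⬝ᵥ S *ᵥ (z l - z m)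
      ≤ qf S (z l) / 2 + c / 2 * ∑ j ∈ Ico m l, qf S (z (j + 1) - z j) := by
  rw [← sum_Ico_sub z hml, mulVec_sum, dotProduct_sum]
  calc ∑ j ∈ Ico m l, z l ⬝ᵥ S *ᵥ (z (j + 1) - z j)
      ≤ ∑ j ∈ Ico m l, (qf S (z l) / (2 * c) + c / 2 * qf S (z (j + 1) - z j)) :=
        sum_le_sum fun j _ => dotProduct_mulVec_le_young hS hc _ _
    _ = (l - m : ℕ) * (qf S (z l) / (2 * c)) + c / 2 * ∑ j ∈ Ico m l, qf S (z (j + 1) - z j) := by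
        rw [sum_add_distrib, sum_const, Nat.card_Ico, nsmul_eq_mul, mul_sum]
    _ ≤ c * (qf S (z l) / (2 * c)) + c / 2 * ∑ j ∈ Ico m l, qf S (z (j + 1) - z j) := by
        gcongr
        exact div_nonneg (qf_nonneg hS _) (by positivity)
    _ = qf S (z l) / 2 + c / 2 * ∑ j ∈ Ico m l, qf S (z (j + 1) - z j) := by
        field_simp

lemma two_mul_sub_add_mulVec_dotProduct (hS : S.PosDef) (ν w z : Fin k → ℝ) :
    2 * ((ν - (w + S *ᵥ z)) ⬝ᵥ z)
      = qf S⁻¹ (ν - w) - qf S⁻¹ (ν - (w + S *ᵥ z)) - qf S z := by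
  rw [show ν - w = (ν - (w + S *ᵥ z)) + S *ᵥ z by abel, qf_add hS.inv.posSemidef.isSymm]
  simp only [qf, hS.inv_mulVec_mulVec]
  rw [dotProduct_comm (S *ᵥ z)]
  ring

lemma delayed_dual_step_le (hS : S.PosDef) (z ω : ℕ → Fin k → ℝ) (d t : ℕ)
    (hω : ω (t + 1) = ω (t - d) + S *ᵥ z (t + 1)) (ν : Fin k → ℝ) :
    (ν - (ω (t - d) + S *ᵥ z (t - d))) ⬝ᵥ z (t + 1)
      ≤ (qf S⁻¹ (ν - ω (t - d)) - qf S⁻¹ (ν - ω (t + 1))) / 2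
        + (1 + d) / 2 * ∑ j ∈ Ico (t - d) (t + 1), qf S (z (j + 1) - z j) := by
  have hid := two_mul_sub_add_mulVec_dotProduct hS ν (ω (t - d)) (z (t + 1))
  rw [← hω] at hid
  have hcross := dotProduct_mulVec_sub_le_sum_Ico hS.posSemidef z (by omega : t - d ≤ t + 1)
    (c := 1 + d) (by positivity) (by exact_mod_cast (by omega : t + 1 - (t - d) ≤ 1 + d))
  have hsplit : (ν - (ω (t - d) + S *ᵥ z (t - d))) ⬝ᵥ z (t + 1)
      = (ν - ω (t + 1)) ⬝ᵥ z (t + 1) + z (t + 1) ⬝ᵥ S *ᵥ (z (t + 1) - z (t - d)) := by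
    rw [hω, mulVec_sub, dotProduct_sub]
    simp only [sub_dotProduct, add_dotProduct]
    rw [dotProduct_comm (S *ᵥ z (t + 1)), dotProduct_comm (S *ᵥ z (t - d))]
    ring
  rw [hsplit]
  linarith

end Delay

section DelayedSums

variable {d : ℕ}

lemma sum_range_sub_delay_le {G : ℕ → ℝ} (hG : ∀ t, 0 ≤ G t) (N : ℕ) :
    ∑ t ∈ range N, (G (t - d) - G (t + 1)) ≤ (1 + d) * G 0 := by
  -- `t - d` truncates at `0`, so the first `d + 1` delayed terms are all `G 0`.
  have hhead : ∑ t ∈ range (d + 1), G (t - d) = (1 + d) * G 0 := by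
    rw [sum_congr rfl fun t ht => by rw [Nat.sub_eq_zero_of_le (by simpa using ht)],
      sum_const, card_range, nsmul_eq_mul]
    push_cast
    ring
  have htail : ∑ t ∈ range N, G (t - d) ≤ (1 + d) * G 0 + ∑ t ∈ range N, G (t + 1) :=
    calc ∑ t ∈ range N, G (t - d) ≤ ∑ t ∈ range (d + 1 + N), G (t - d) :=
          sum_le_sum_of_subset_of_nonneg (range_subset_range.2 (by omega)) fun _ _ _ => hG _
      _ = (1 + d) * G 0 + ∑ t ∈ range N, G (t + 1) := by
          rw [sum_range_add, hhead]
          congr 1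
          exact sum_congr rfl fun t _ => by congr 1; omega
  rw [sum_sub_distrib]
  linarith

lemma sum_range_sum_Ico_le {h : ℕ → ℝ} (hh : ∀ t, 0 ≤ h t) (N : ℕ) :
    ∑ t ∈ range N, ∑ j ∈ Ico (t - d) (t + 1), h j ≤ (1 + d) * ∑ j ∈ range N, h j := by
  rw [sum_comm' (t' := range N) (s' := fun j => Ico j (j + d + 1) ∩ range N)
    (fun t j => by simp only [mem_range, mem_Ico, mem_inter]; omega), mul_sum]
  refine sum_le_sum fun j _ => ?_
  rw [sum_const, nsmul_eq_mul]
  gcongr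
  · exact hh j
  calc ((Ico j (j + d + 1) ∩ range N).card : ℝ) ≤ (Ico j (j + d + 1)).card := by
        exact_mod_cast card_le_card inter_subset_left
    _ = 1 + d := by rw [Nat.card_Ico, show j + d + 1 - j = 1 + d by omega]; push_cast; rfl

lemma sum_range_le_of_delayed_descent {ℓ B G h : ℕ → ℝ} (hB : ∀ t, 0 ≤ B t)
    (hG : ∀ t, 0 ≤ G t) (hh : ∀ t, 0 ≤ h t)
    (hstep : ∀ t, ℓ t ≤ (B t - B (t + 1)) + (G (t - d) - G (t + 1))
      + (1 + d) / 2 * ∑ j ∈ Ico (t - d) (t + 1), h j - (1 + d) ^ 2 / 2 * h t) (N : ℕ) :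
    ∑ t ∈ range N, ℓ t ≤ B 0 + (1 + d) * G 0 := by
  have hsum := sum_le_sum fun t (_ : t ∈ range N) => hstep t
  simp only [sum_sub_distrib, sum_add_distrib, ← mul_sum] at hsum
  have htel := sum_range_sub' B N
  have hdelay := sum_range_sub_delay_le (d := d) hG N
  rw [sum_sub_distrib] at htel hdelay
  have hcount := mul_le_mul_of_nonneg_left (sum_range_sum_Ico_le (d := d) hh N)
    (by positivity : (0 : ℝ) ≤ (1 + d) / 2)
  have := hB N
  linarith

end DelayedSums

section AsynDDPG

variable {n p : ℕ} {Z : Matrix (Fin p) (Fin n) ℝ} {C H : Matrix (Fin n) (Fin n) ℝ}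
  {S : Matrix (Fin p) (Fin p) ℝ} {Hs Hr : (Fin n → ℝ) → ℝ} {gs : (Fin n → ℝ) → Fin n → ℝ}
  {α : ℕ → Fin n → ℝ} {ω : ℕ → Fin p → ℝ} {d : ℕ}

lemma asyn_ddpg_step_le (hC : C.PosDef) (hS : S.PosDef)
    (hconv_s : ∀ a b, Hs a + gs a ⬝ᵥ (b - a) ≤ Hs b)
    (hsmooth : ∀ a b, Hs b ≤ Hs a + gs a ⬝ᵥ (b - a) + 1 / 2 * qf H (b - a))
    (hr : ConvexOn ℝ Set.univ Hr)
    (hα : ∀ t v, Hr (α (t + 1)) + 1 / 2 * qf C⁻¹ (α (t + 1) -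
          (α t - C *ᵥ (gs (α t) + Zᵀ *ᵥ ω (t - d) + (Zᵀ * S * Z) *ᵥ α (t - d))))
        ≤ Hr v + 1 / 2 * qf C⁻¹ (v -
          (α t - C *ᵥ (gs (α t) + Zᵀ *ᵥ ω (t - d) + (Zᵀ * S * Z) *ᵥ α (t - d)))))
    (hω : ∀ t, ω (t + 1) = ω (t - d) + (S * Z) *ᵥ α (t + 1))
    (hstep : (C⁻¹ - H - Zᵀ * ((1 + d : ℝ) ^ 2 • S) * Z).PosSemidef)
    {αs : Fin n → ℝ} (hαs : Z *ᵥ αs = 0) (ν : Fin p → ℝ) (t : ℕ) :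
    Hs (α (t + 1)) + Hr (α (t + 1)) - (Hs αs + Hr αs) + ν ⬝ᵥ Z *ᵥ α (t + 1)
      ≤ (qf C⁻¹ (αs - α t) / 2 - qf C⁻¹ (αs - α (t + 1)) / 2)
        + (qf S⁻¹ (ν - ω (t - d)) / 2 - qf S⁻¹ (ν - ω (t + 1)) / 2)
        + (1 + d) / 2 * ∑ j ∈ Ico (t - d) (t + 1), qf S (Z *ᵥ α (j + 1) - Z *ᵥ α j)
        - (1 + d) ^ 2 / 2 * qf S (Z *ᵥ α (t + 1) - Z *ᵥ α t) := by
  set w := ω (t - d) + S *ᵥ Z *ᵥ α (t - d)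
  have hq : gs (α t) + Zᵀ *ᵥ w = gs (α t) + Zᵀ *ᵥ ω (t - d) + (Zᵀ * S * Z) *ᵥ α (t - d) := by
    rw [mulVec_add, ← add_assoc, ← mulVec_mulVec, ← mulVec_mulVec]
  have hprimal := prox_grad_step_le hC hconv_s hsmooth hr (q := Zᵀ *ᵥ w)
    (by rw [hq]; exact hα t) αs
  rw [dotProduct_comm, dotProduct_transpose_mulVec, mulVec_sub, hαs, zero_sub,
    dotProduct_neg] at hprimal
  have hdual := delayed_dual_step_le hS (fun j => Z *ᵥ α j) ω d t
    (by rw [hω, mulVec_mulVec]) ν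
  have hsize := qf_add_mul_qf_mulVec_le hstep (α (t + 1) - α t)
  rw [mulVec_sub] at hsize
  rw [sub_dotProduct] at hdual
  linarith

end AsynDDPG

theorem asyn_ddpg_convergence_rates_general
    (n p : ℕ) (Z : Matrix (Fin p) (Fin n) ℝ)
    (C Hm : Matrix (Fin n) (Fin n) ℝ) (S : Matrix (Fin p) (Fin p) ℝ)
    (hC : C.PosDef) (hS : S.PosDef)
    (d : ℕ)
    (Hs Hr : (Fin n → ℝ) → ℝ) (gs : (Fin n → ℝ) → (Fin n → ℝ))
    (hconv_s : ∀ a b : Fin n → ℝ, Hs a + gs a ⬝ᵥ (b - a) ≤ Hs b)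
    (hsmooth : ∀ a b : Fin n → ℝ, Hs b ≤ Hs a + gs a ⬝ᵥ (b - a) + 1 / 2 * qf Hm (b - a))
    (hr : ConvexOn ℝ Set.univ Hr)
    (α : ℕ → Fin n → ℝ) (ω : ℕ → Fin p → ℝ)
    (hα : ∀ t : ℕ, ∀ v : Fin n → ℝ,
      Hr (α (t + 1)) + 1 / 2 * qf C⁻¹ (α (t + 1) -
          (α t - C *ᵥ (gs (α t) + Zᵀ *ᵥ ω (t - d) + (Zᵀ * S * Z) *ᵥ α (t - d))))
        ≤ Hr v + 1 / 2 * qf C⁻¹ (v -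
          (α t - C *ᵥ (gs (α t) + Zᵀ *ᵥ ω (t - d) + (Zᵀ * S * Z) *ᵥ α (t - d)))))
    (hω : ∀ t : ℕ, ω (t + 1) = ω (t - d) + (S * Z) *ᵥ α (t + 1))
    (hstep1 : (C⁻¹ - Hm - Zᵀ * (((1 + d : ℝ)) ^ 2 • S) * Z).PosSemidef)
    (κ : ℝ)
    (αs : Fin n → ℝ) (hαs : Z *ᵥ αs = 0) (ωs : Fin p → ℝ)
    (hsaddle : ∀ a : Fin n → ℝ, Hs αs + Hr αs ≤ (Hs a + Hr a) + ωs ⬝ᵥ (Z *ᵥ a))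
    (Ξ : ℝ)
    (hΞ : Ξ = 4 * (1 + d : ℝ) * lamMax S⁻¹ * (ωs ⬝ᵥ ωs)
        + (1 + d : ℝ) * qf S⁻¹ (ω 0)
        + 1 / 2 * qf C⁻¹ (αs - α 0)
        + 4 * (d : ℝ) * κ ^ 2 / 2)
    (T : ℕ)
    (abar : Fin n → ℝ)
    (habar : abar = (T + 1 : ℝ)⁻¹ • ∑ t ∈ Finset.range (T + 1), α (t + 1)) :
    Real.sqrt (ωs ⬝ᵥ ωs) * Real.sqrt ((Z *ᵥ abar) ⬝ᵥ (Z *ᵥ abar)) ≤ Ξ / (T + 1) ∧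
      |(Hs abar + Hr abar) - (Hs αs + Hr αs)| ≤ Ξ / (T + 1) := by
  have hT : (0 : ℝ) < T + 1 := by positivity
  have hSi := hS.inv.posSemidef
  obtain ⟨ν, hνZ, hνν⟩ := exists_dotProduct_eq_two_mul_sqrt_mul_sqrt ωs (Z *ᵥ abar)
  have hsum := sum_range_le_of_delayed_descent
    (ℓ := fun t => (Hs + Hr) (α (t + 1)) - (Hs + Hr) αs + ν ⬝ᵥ Z *ᵥ α (t + 1))
    (B := fun t => qf C⁻¹ (αs - α t) / 2) (G := fun t => qf S⁻¹ (ν - ω t) / 2)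
    (h := fun j => qf S (Z *ᵥ α (j + 1) - Z *ᵥ α j))
    (fun t => by positivity [qf_nonneg hC.inv.posSemidef (αs - α t)])
    (fun t => by positivity [qf_nonneg hSi (ν - ω t)])
    (fun j => qf_nonneg hS.posSemidef _)
    (asyn_ddpg_step_le hC hS hconv_s hsmooth hr hα hω hstep1 hαs ν) (T + 1)
  have havg := ((convexOn_univ_of_subgradient gs hconv_s).add hr).mul_map_add_dotProduct_average_le
    Z ν ((Hs + Hr) αs) (fun t => α (t + 1)) T
  rw [← habar, hνZ] at havg
  simp only [Pi.add_apply] at havg hsum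
  have hdual : qf S⁻¹ (ν - ω 0) / 2 ≤ 4 * lamMax S⁻¹ * (ωs ⬝ᵥ ωs) + qf S⁻¹ (ω 0) := by
    linarith [half_qf_sub_le_lamMax_mul_add hSi ν (ω 0),
      mul_le_mul_of_nonneg_left hνν (lamMax_nonneg hSi)]
  have hconst : qf C⁻¹ (αs - α 0) / 2 + (1 + d) * (qf S⁻¹ (ν - ω 0) / 2) ≤ Ξ := by
    have : 0 ≤ 4 * (d : ℝ) * κ ^ 2 / 2 := by positivity
    rw [hΞ]
    linarith [mul_le_mul_of_nonneg_left hdual (by positivity : (0 : ℝ) ≤ 1 + d)]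
  have hlower := (hsaddle abar).trans (add_le_add_right (dotProduct_le_sqrt_mul_sqrt ωs _) _)
  have hgap : Hs abar + Hr abar - (Hs αs + Hr αs)
      + 2 * (√(ωs ⬝ᵥ ωs) * √((Z *ᵥ abar) ⬝ᵥ (Z *ᵥ abar))) ≤ Ξ / (T + 1) := by
    rw [le_div_iff₀ hT]
    linarith
  have hr0 : 0 ≤ √(ωs ⬝ᵥ ωs) * √((Z *ᵥ abar) ⬝ᵥ (Z *ᵥ abar)) := by positivity
  exact ⟨by linarith, abs_le.2 ⟨by linarith, by linarith⟩⟩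

/-- Theorem 2: O(1/T) convergence rates of the Asyn-DDPG algorithm. -/
theorem asyn_ddpg_convergence_rates
    (n p : ℕ) (Z : Matrix (Fin p) (Fin n) ℝ)
    (C Hm : Matrix (Fin n) (Fin n) ℝ) (S : Matrix (Fin p) (Fin p) ℝ)
    (hC : C.PosDef) (hHm : Hm.PosDef) (hS : S.PosDef)
    (d : ℕ) (hd : 1 ≤ d)
    (Hs Hr : (Fin n → ℝ) → ℝ) (gs : (Fin n → ℝ) → (Fin n → ℝ))
    (hconv_s : ∀ a b : Fin n → ℝ, Hs a + gs a ⬝ᵥ (b - a) ≤ Hs b)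
    (hsmooth : ∀ a b : Fin n → ℝ, Hs b ≤ Hs a + gs a ⬝ᵥ (b - a) + 1 / 2 * qf Hm (b - a))
    (hr : ConvexOn ℝ Set.univ Hr)
    (α : ℕ → Fin n → ℝ) (ω : ℕ → Fin p → ℝ)
    (hα : ∀ t : ℕ, ∀ v : Fin n → ℝ,
      Hr (α (t + 1)) + 1 / 2 * qf C⁻¹ (α (t + 1) -
          (α t - C *ᵥ (gs (α t) + Zᵀ *ᵥ ω (t - d) + (Zᵀ * S * Z) *ᵥ α (t - d))))
        ≤ Hr v + 1 / 2 * qf C⁻¹ (v -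
          (α t - C *ᵥ (gs (α t) + Zᵀ *ᵥ ω (t - d) + (Zᵀ * S * Z) *ᵥ α (t - d)))))
    (hω : ∀ t : ℕ, ω (t + 1) = ω (t - d) + (S * Z) *ᵥ α (t + 1))
    (hstep1 : (C⁻¹ - Hm - Zᵀ * (((1 + d : ℝ)) ^ 2 • S) * Z).PosSemidef)
    (hstep2 : (C⁻¹ - Zᵀ * S * Z).PosDef)
    (κ : ℝ) (hκ : 0 ≤ κ) (hbound : ∀ t : ℕ, qf (Zᵀ * S * Z) (α t) ≤ κ ^ 2)
    (αs : Fin n → ℝ) (hαs : Z *ᵥ αs = 0) (ωs : Fin p → ℝ)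
    (hsaddle : ∀ a : Fin n → ℝ, Hs αs + Hr αs ≤ (Hs a + Hr a) + ωs ⬝ᵥ (Z *ᵥ a))
    (Ξ : ℝ)
    (hΞ : Ξ = 4 * (1 + d : ℝ) * lamMax S⁻¹ * (ωs ⬝ᵥ ωs)
        + (1 + d : ℝ) * qf S⁻¹ (ω 0)
        + 1 / 2 * qf C⁻¹ (αs - α 0)
        + 4 * (d : ℝ) * κ ^ 2 / 2)
    (T : ℕ) (hT : 2 * d + 1 ≤ T)
    (abar : Fin n → ℝ)
    (habar : abar = (T + 1 : ℝ)⁻¹ • ∑ t ∈ Finset.range (T + 1), α (t + 1)) :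
    Real.sqrt (ωs ⬝ᵥ ωs) * Real.sqrt ((Z *ᵥ abar) ⬝ᵥ (Z *ᵥ abar)) ≤ Ξ / (T + 1) ∧
      |(Hs abar + Hr abar) - (Hs αs + Hr αs)| ≤ Ξ / (T + 1) :=
  asyn_ddpg_convergence_rates_general n p Z C Hm S hC hS d Hs Hr gs hconv_s hsmooth hr α ω hα hω
    hstep1 κ αs hαs ωs hsaddle Ξ hΞ T abar habar
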